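/- The TN₁-Smarandache ruled surface χ(s,v) = (T+N₁)/√2 + v N₂ of a unit-speed curve γ with Bishop curvatures k₁, k₂ has Gaussian curvature K = -(1/2)·(k₁k₂/(k₁² + v²k₂² + √2 v k₁k₂))². -/

import Mathlib

/-!
A ruled surface has `χ_vv = 0`, so `K = -M² / (EG - F²)`, and by Lagrange's identity
`EG - F² = ‖w‖²` for `w = χ_s × χ_v`; hence `K = -(⟪χ_sv, w⟫ / ‖w‖²)²`. In the Bishop frame
`χ_v = N₂`, `χ_sv = -k₂ T` and `χ_s = -(k₁/√2 + v k₂) T + (k₁/√2) N₁ + (k₂/√2) N₂`, so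
`w = (k₁/√2) T + (k₁/√2 + v k₂) N₁`, `⟪χ_sv, w⟫ = -k₁ k₂ / √2` and
`‖w‖² = k₁² + v² k₂² + √2 v k₁ k₂`.

At a parameter where the frame is not differentiable, `deriv` returns `0`; the frame equations then
force `k₁ k₂ = 0` and `χ_sv = 0`, so both sides vanish.
-/

open Real RealInnerProductSpace intervalIntegral

noncomputable section

abbrev E3 : Type := EuclideanSpace ℝ (Fin 3)

def cross3 (a b : E3) : E3 :=
  WithLp.toLp 2 ![a 1 * b 2 - a 2 * b 1, a 2 * b 0 - a 0 * b 2, a 0 * b 1 - a 1 * b 0]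

lemma cross3_add_left (a a' b : E3) : cross3 (a + a') b = cross3 a b + cross3 a' b := by
  ext i; fin_cases i <;> simp [cross3] <;> ring

lemma cross3_smul_left (r : ℝ) (a b : E3) : cross3 (r • a) b = r • cross3 a b := by
  ext i; fin_cases i <;> simp [cross3] <;> ring

lemma cross3_self (a : E3) : cross3 a a = 0 := by
  ext i; fin_cases i <;> simp [cross3] <;> ring

lemma cross3_cross3 (a b c : E3) : cross3 a (cross3 b c) = ⟪a, c⟫ • b - ⟪a, b⟫ • c := by
  ext i; fin_cases i <;> simp [cross3, PiLp.inner_apply, Fin.sum_univ_three] <;> ring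

lemma norm_cross3_sq (a b : E3) : ‖cross3 a b‖ ^ 2 = ‖a‖ ^ 2 * ‖b‖ ^ 2 - ⟪a, b⟫ ^ 2 := by
  simp [EuclideanSpace.real_norm_sq_eq, cross3, PiLp.inner_apply, Fin.sum_univ_three]
  ring

lemma cross3_add_smul_cross3_of_orthonormal {e₁ e₂ : E3} (h₁ : ‖e₁‖ = 1) (h₂ : ‖e₂‖ = 1)
    (h₁₂ : ⟪e₁, e₂⟫ = 0) (α β γ : ℝ) :
    cross3 (α • e₁ + β • e₂ + γ • cross3 e₁ e₂) (cross3 e₁ e₂) = β • e₁ - α • e₂ := by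
  have h₁₁ : ⟪e₁, e₁⟫ = 1 := by rw [real_inner_self_eq_norm_sq, h₁, one_pow]
  have h₂₂ : ⟪e₂, e₂⟫ = 1 := by rw [real_inner_self_eq_norm_sq, h₂, one_pow]
  rw [cross3_add_left, cross3_add_left, cross3_smul_left, cross3_smul_left, cross3_smul_left,
    cross3_self, cross3_cross3, cross3_cross3, h₁₁, h₂₂, h₁₂, real_inner_comm, h₁₂]
  module

lemma inner_smul_cross3_div_norm_sq {e₁ e₂ : E3} (h₁ : ‖e₁‖ = 1) (h₂ : ‖e₂‖ = 1)
    (h₁₂ : ⟪e₁, e₂⟫ = 0) (α β γ c : ℝ) :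
    ⟪c • e₁, cross3 (α • e₁ + β • e₂ + γ • cross3 e₁ e₂) (cross3 e₁ e₂)⟫ /
        ‖cross3 (α • e₁ + β • e₂ + γ • cross3 e₁ e₂) (cross3 e₁ e₂)‖ ^ 2 =
      c * β / (α ^ 2 + β ^ 2) := by
  have h₁₁ : ⟪e₁, e₁⟫ = 1 := by rw [real_inner_self_eq_norm_sq, h₁, one_pow]
  have h₂₂ : ⟪e₂, e₂⟫ = 1 := by rw [real_inner_self_eq_norm_sq, h₂, one_pow]
  rw [cross3_add_smul_cross3_of_orthonormal h₁ h₂ h₁₂, ← real_inner_self_eq_norm_sq]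
  simp only [inner_sub_left, inner_sub_right, real_inner_smul_left, real_inner_smul_right, h₁₁,
    h₂₂, h₁₂, real_inner_comm e₁ e₂]
  ring

def gaussCurvature (xs xv xss xsv xvv : E3) : ℝ :=
  let n := ‖cross3 xs xv‖⁻¹ • cross3 xs xv
  (⟪xss, n⟫ * ⟪xvv, n⟫ - ⟪xsv, n⟫ ^ 2) / (⟪xs, xs⟫ * ⟪xv, xv⟫ - ⟪xs, xv⟫ ^ 2)

lemma gaussCurvature_of_vv_eq_zero (xs xv xss xsv : E3) :
    gaussCurvature xs xv xss xsv 0 = -(⟪xsv, cross3 xs xv⟫ / ‖cross3 xs xv‖ ^ 2) ^ 2 := by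
  rw [gaussCurvature, real_inner_self_eq_norm_sq, real_inner_self_eq_norm_sq, ← norm_cross3_sq]
  simp only [inner_zero_left, mul_zero, zero_sub, real_inner_smul_right]
  ring

section

variable {E : Type*} [NormedAddCommGroup E] [NormedSpace ℝ E]

lemma deriv_const_add_smul (a b : E) (u : ℝ) : deriv (fun u : ℝ => a + u • b) u = b := by
  simpa using (((hasDerivAt_id u).smul_const b).const_add a).deriv

lemma deriv_eq_zero_of_forall_ne_eq_zero {g : ℝ → E} {u₀ : ℝ} (h : ∀ u ≠ u₀, g u = 0)
    (v : ℝ) : deriv g v = 0 := by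
  by_cases hg : g u₀ = 0
  · have : g = 0 := funext fun u => by obtain rfl | hu := eq_or_ne u u₀ <;> simp [*]
    simp [this]
  obtain rfl | hv := eq_or_ne v u₀
  · refine deriv_zero_of_not_differentiableAt fun hd => hg ?_
    have hlim : Filter.Tendsto g (nhdsWithin v {v}ᶜ) (nhds (g v)) :=
      hd.continuousAt.tendsto.mono_left nhdsWithin_le_nhds
    refine tendsto_nhds_unique hlim ?_
    exact tendsto_const_nhds.congr' (eventually_nhdsWithin_of_forall fun u hu => (h u hu).symm)
  · have : g =ᶠ[nhds v] fun _ => 0 := eventually_ne_nhds hv |>.mono h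
    simp [this.deriv_eq]

variable {f g : ℝ → E} {s : ℝ}

lemma deriv_add_smul (hf : DifferentiableAt ℝ f s) (hg : DifferentiableAt ℝ g s) (u : ℝ) :
    deriv (fun t => f t + u • g t) s = deriv f s + u • deriv g s :=
  (hf.hasDerivAt.add (hg.hasDerivAt.const_smul u)).deriv

lemma deriv_deriv_add_smul (hf : DifferentiableAt ℝ f s) (hg : DifferentiableAt ℝ g s) (v : ℝ) :
    deriv (fun u => deriv (fun t => f t + u • g t) s) v = deriv g s := by
  simp only [deriv_add_smul hf hg, deriv_const_add_smul]

lemma exists_forall_ne_not_differentiableAt_add_smul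
    (h : ¬ (DifferentiableAt ℝ f s ∧ DifferentiableAt ℝ g s)) :
    ∃ u₀ : ℝ, ∀ u ≠ u₀, ¬ DifferentiableAt ℝ (fun t => f t + u • g t) s := by
  by_contra! hne
  obtain ⟨u₁, hu₁⟩ := hne 0
  obtain ⟨u₂, hu₂, hd₂⟩ := hne u₁
  have hg : DifferentiableAt ℝ g s := by
    have hg_eq : g = fun t => (u₂ - u₁)⁻¹ • ((f t + u₂ • g t) - (f t + u₁ • g t)) := by
      funext t
      rw [add_sub_add_left_eq_sub, ← sub_smul, smul_smul, inv_mul_cancel₀ (sub_ne_zero.2 hu₂),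
        one_smul]
    rw [hg_eq]
    exact (hd₂.sub hu₁.2).const_smul _
  have hf_eq : f = fun t => (f t + u₁ • g t) - u₁ • g t := by simp
  exact h ⟨hf_eq ▸ hu₁.2.sub (hg.const_smul u₁), hg⟩

lemma deriv_deriv_add_smul_of_not_differentiableAt
    (h : ¬ (DifferentiableAt ℝ f s ∧ DifferentiableAt ℝ g s)) (v : ℝ) :
    deriv (fun u => deriv (fun t => f t + u • g t) s) v = 0 := by
  obtain ⟨u₀, hu₀⟩ := exists_forall_ne_not_differentiableAt_add_smul h
  exact deriv_eq_zero_of_forall_ne_eq_zero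
    (fun u hu => deriv_zero_of_not_differentiableAt (hu₀ u hu)) v

end

def tn₁Smarandache (T N₁ N₂ : ℝ → E3) (t u : ℝ) : E3 := (√2)⁻¹ • (T t + N₁ t) + u • N₂ t

section

variable {T N₁ N₂ : ℝ → E3} {k₁ k₂ : ℝ → ℝ} {s : ℝ}

lemma eq_zero_of_deriv_eq_neg_smul_of_not_differentiableAt {X : ℝ → E3} {a : ℝ}
    (hX : deriv X s = -a • T s) (hTu : ‖T s‖ = 1) (hdX : ¬ DifferentiableAt ℝ X s) : a = 0 := by
  have h : -a • T s = 0 := hX.symm.trans (deriv_zero_of_not_differentiableAt hdX)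
  simpa using (smul_eq_zero.1 h).resolve_right (norm_ne_zero_iff.1 (by simp [hTu]))

lemma k₂_eq_zero_of_not_differentiableAt (hT : deriv T s = k₁ s • N₁ s + k₂ s • N₂ s)
    (hN₂u : ‖N₂ s‖ = 1) (hN₁N₂ : ⟪N₁ s, N₂ s⟫ = 0) (hdT : ¬ DifferentiableAt ℝ T s) :
    k₂ s = 0 := by
  have h := congrArg (⟪·, N₂ s⟫) (hT.symm.trans (deriv_zero_of_not_differentiableAt hdT))
  simpa [inner_add_left, real_inner_smul_left, hN₁N₂, real_inner_self_eq_norm_sq, hN₂u] using h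

lemma mul_eq_zero_of_not_differentiableAt (hT : deriv T s = k₁ s • N₁ s + k₂ s • N₂ s)
    (hN₁ : deriv N₁ s = -(k₁ s) • T s) (hN₂ : deriv N₂ s = -(k₂ s) • T s)
    (hTu : ‖T s‖ = 1) (hN₂u : ‖N₂ s‖ = 1) (hN₁N₂ : ⟪N₁ s, N₂ s⟫ = 0)
    (h : ¬ (DifferentiableAt ℝ T s ∧ DifferentiableAt ℝ N₁ s ∧ DifferentiableAt ℝ N₂ s)) :
    k₁ s * k₂ s = 0 := by
  simp only [not_and_or] at h
  rcases h with hdT | hdN₁ | hdN₂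
  · simp [k₂_eq_zero_of_not_differentiableAt hT hN₂u hN₁N₂ hdT]
  · simp [eq_zero_of_deriv_eq_neg_smul_of_not_differentiableAt hN₁ hTu hdN₁]
  · simp [eq_zero_of_deriv_eq_neg_smul_of_not_differentiableAt hN₂ hTu hdN₂]

lemma deriv_deriv_tn₁Smarandache_of_not_differentiableAt
    (hT : deriv T s = k₁ s • N₁ s + k₂ s • N₂ s) (hN₂ : deriv N₂ s = -(k₂ s) • T s)
    (hN₂u : ‖N₂ s‖ = 1) (hN₁N₂ : ⟪N₁ s, N₂ s⟫ = 0)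
    (h : ¬ (DifferentiableAt ℝ T s ∧ DifferentiableAt ℝ N₁ s ∧ DifferentiableAt ℝ N₂ s)) (v : ℝ) :
    deriv (fun u => deriv (fun t => tn₁Smarandache T N₁ N₂ t u) s) v = 0 := by
  by_cases hQ : DifferentiableAt ℝ (fun t => (√2)⁻¹ • (T t + N₁ t)) s ∧ DifferentiableAt ℝ N₂ s
  swap
  · exact deriv_deriv_add_smul_of_not_differentiableAt hQ v
  obtain ⟨hdQ, hdN₂⟩ := hQ
  have hdT : ¬ DifferentiableAt ℝ T s := by
    intro hdT
    have hN₁_eq : N₁ = fun t => √2 • ((√2)⁻¹ • (T t + N₁ t)) - T t := by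
      funext t
      rw [smul_inv_smul₀ (by positivity), add_sub_cancel_left]
    refine h ⟨hdT, ?_, hdN₂⟩
    rw [hN₁_eq]
    exact (hdQ.const_smul √2).sub hdT
  refine (deriv_deriv_add_smul hdQ hdN₂ v).trans ?_
  rw [hN₂, k₂_eq_zero_of_not_differentiableAt hT hN₂u hN₁N₂ hdT, neg_zero, zero_smul]

lemma deriv_tn₁Smarandache (hT : deriv T s = k₁ s • N₁ s + k₂ s • N₂ s)
    (hN₁ : deriv N₁ s = -(k₁ s) • T s) (hN₂ : deriv N₂ s = -(k₂ s) • T s)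
    (hdT : DifferentiableAt ℝ T s) (hdN₁ : DifferentiableAt ℝ N₁ s)
    (hdN₂ : DifferentiableAt ℝ N₂ s) (v : ℝ) :
    deriv (fun t => tn₁Smarandache T N₁ N₂ t v) s =
      (-((√2)⁻¹ * k₁ s + v * k₂ s)) • T s + ((√2)⁻¹ * k₁ s) • N₁ s + ((√2)⁻¹ * k₂ s) • N₂ s := by
  have hQ := (hdT.hasDerivAt.add hdN₁.hasDerivAt).const_smul (√2)⁻¹
  refine (hQ.add (hdN₂.hasDerivAt.const_smul v)).deriv.trans ?_
  rw [hT, hN₁, hN₂]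
  module

lemma deriv_deriv_tn₁Smarandache (hN₂ : deriv N₂ s = -(k₂ s) • T s)
    (hdT : DifferentiableAt ℝ T s) (hdN₁ : DifferentiableAt ℝ N₁ s)
    (hdN₂ : DifferentiableAt ℝ N₂ s) (v : ℝ) :
    deriv (fun u => deriv (fun t => tn₁Smarandache T N₁ N₂ t u) s) v = -(k₂ s) • T s :=
  (deriv_deriv_add_smul ((hdT.add hdN₁).const_smul (√2)⁻¹) hdN₂ v).trans hN₂

theorem tn₁Smarandache_inner_cross3_div_norm_sq
    (hT : deriv T s = k₁ s • N₁ s + k₂ s • N₂ s)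
    (hN₁ : deriv N₁ s = -(k₁ s) • T s) (hN₂ : deriv N₂ s = -(k₂ s) • T s)
    (hTu : ‖T s‖ = 1) (hN₁u : ‖N₁ s‖ = 1) (hN₂u : ‖N₂ s‖ = 1)
    (hTN₁ : ⟪T s, N₁ s⟫ = 0) (hN₁N₂ : ⟪N₁ s, N₂ s⟫ = 0)
    (horient : cross3 (T s) (N₁ s) = N₂ s) (v : ℝ) :
    ⟪deriv (fun u => deriv (fun t => tn₁Smarandache T N₁ N₂ t u) s) v,
        cross3 (deriv (fun t => tn₁Smarandache T N₁ N₂ t v) s) (N₂ s)⟫ /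
      ‖cross3 (deriv (fun t => tn₁Smarandache T N₁ N₂ t v) s) (N₂ s)‖ ^ 2 =
    -(k₁ s * k₂ s) / (√2 * (k₁ s ^ 2 + v ^ 2 * k₂ s ^ 2 + √2 * v * k₁ s * k₂ s)) := by
  by_cases hd : DifferentiableAt ℝ T s ∧ DifferentiableAt ℝ N₁ s ∧ DifferentiableAt ℝ N₂ s
  swap
  · rw [deriv_deriv_tn₁Smarandache_of_not_differentiableAt hT hN₂ hN₂u hN₁N₂ hd,
      mul_eq_zero_of_not_differentiableAt hT hN₁ hN₂ hTu hN₂u hN₁N₂ hd]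
    simp
  obtain ⟨hdT, hdN₁, hdN₂⟩ := hd
  rw [deriv_deriv_tn₁Smarandache hN₂ hdT hdN₁ hdN₂, deriv_tn₁Smarandache hT hN₁ hN₂ hdT hdN₁ hdN₂,
    ← horient, inner_smul_cross3_div_norm_sq hTu hN₁u hTN₁]
  have hsq : (-((√2)⁻¹ * k₁ s + v * k₂ s)) ^ 2 + ((√2)⁻¹ * k₁ s) ^ 2 =
      k₁ s ^ 2 + v ^ 2 * k₂ s ^ 2 + √2 * v * k₁ s * k₂ s := by
    have h₁ : √2 * (√2)⁻¹ = 1 := mul_inv_cancel₀ (by positivity)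
    have h₂ : √2 ^ 2 = 2 := sq_sqrt zero_le_two
    linear_combination (k₁ s ^ 2 * (√2 * (√2)⁻¹ + 1) + √2 * v * k₁ s * k₂ s) * h₁ -
      (k₁ s ^ 2 * (√2)⁻¹ ^ 2 + (√2)⁻¹ * v * k₁ s * k₂ s) * h₂
  rw [hsq, mul_comm √2, ← div_div]
  ring

end

theorem stmt_2_general
    (T N₁ N₂ : ℝ → E3) (k₁ k₂ : ℝ → ℝ)
    (hT : ∀ s, deriv T s = k₁ s • N₁ s + k₂ s • N₂ s)
    (hN₁ : ∀ s, deriv N₁ s = -(k₁ s) • T s)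
    (hN₂ : ∀ s, deriv N₂ s = -(k₂ s) • T s)
    (hTu : ∀ s, ‖T s‖ = 1) (hN₁u : ∀ s, ‖N₁ s‖ = 1) (hN₂u : ∀ s, ‖N₂ s‖ = 1)
    (hTN₁ : ∀ s, ⟪T s, N₁ s⟫ = 0)
    (hN₁N₂ : ∀ s, ⟪N₁ s, N₂ s⟫ = 0)
    (horient : ∀ s, cross3 (T s) (N₁ s) = N₂ s)
    :
    ∀ s v : ℝ,
      let χ : ℝ → ℝ → E3 := fun t u => (Real.sqrt 2)⁻¹ • (T t + N₁ t) + u • N₂ t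
      let χs : E3 := deriv (fun t => χ t v) s
      let χv : E3 := deriv (fun u => χ s u) v
      let χss : E3 := deriv (fun t => deriv (fun t' => χ t' v) t) s
      let χsv : E3 := deriv (fun u => deriv (fun t => χ t u) s) v
      let χvv : E3 := deriv (fun u => deriv (fun u' => χ s u') u) v
      let n : E3 := ‖cross3 χs χv‖⁻¹ • cross3 χs χv
      let Ec : ℝ := ⟪χs, χs⟫
      let Fc : ℝ := ⟪χs, χv⟫
      let Gc : ℝ := ⟪χv, χv⟫
      let Lc : ℝ := ⟪χss, n⟫
      let Mc : ℝ := ⟪χsv, n⟫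
      let Nc : ℝ := ⟪χvv, n⟫
      let Kc : ℝ := (Lc * Nc - Mc ^ 2) / (Ec * Gc - Fc ^ 2)
      let Hc : ℝ := (Ec * Nc - 2 * Mc * Fc + Lc * Gc) / (2 * (Ec * Gc - Fc ^ 2))
      Kc = -(1/2) * (k₁ s * k₂ s / (k₁ s ^ 2 + v ^ 2 * k₂ s ^ 2 + Real.sqrt 2 * v * k₁ s * k₂ s)) ^ 2 := by
  intro s v χ χs χv χss χsv χvv
  have hχv : χv = N₂ s := deriv_const_add_smul _ _ v
  have hχvv : χvv = 0 := by simp only [χvv, χ, deriv_const_add_smul, deriv_const]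
  have hratio : ⟪χsv, cross3 χs χv⟫ / ‖cross3 χs χv‖ ^ 2 =
      -(k₁ s * k₂ s) / (√2 * (k₁ s ^ 2 + v ^ 2 * k₂ s ^ 2 + √2 * v * k₁ s * k₂ s)) :=
    hχv ▸ tn₁Smarandache_inner_cross3_div_norm_sq (hT s) (hN₁ s) (hN₂ s) (hTu s) (hN₁u s)
      (hN₂u s) (hTN₁ s) (hN₁N₂ s) (horient s) v
  show gaussCurvature χs χv χss χsv χvv = _
  rw [hχvv, gaussCurvature_of_vv_eq_zero, hratio]
  generalize k₁ s ^ 2 + v ^ 2 * k₂ s ^ 2 + √2 * v * k₁ s * k₂ s = d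
  rw [neg_div, neg_sq, div_pow, mul_pow √2, sq_sqrt zero_le_two]
  ring

/-- Gaussian curvature of the TN₁-Smarandache ruled surface. -/
theorem stmt_2
    (T N₁ N₂ : ℝ → E3) (k₁ k₂ : ℝ → ℝ)
    (hT : ∀ s, deriv T s = k₁ s • N₁ s + k₂ s • N₂ s)
    (hN₁ : ∀ s, deriv N₁ s = -(k₁ s) • T s)
    (hN₂ : ∀ s, deriv N₂ s = -(k₂ s) • T s)
    (hTu : ∀ s, ‖T s‖ = 1) (hN₁u : ∀ s, ‖N₁ s‖ = 1) (hN₂u : ∀ s, ‖N₂ s‖ = 1)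
    (hTN₁ : ∀ s, ⟪T s, N₁ s⟫ = 0) (hTN₂ : ∀ s, ⟪T s, N₂ s⟫ = 0)
    (hN₁N₂ : ∀ s, ⟪N₁ s, N₂ s⟫ = 0)
    (horient : ∀ s, cross3 (T s) (N₁ s) = N₂ s)
    :
    ∀ s v : ℝ,
      let χ : ℝ → ℝ → E3 := fun t u => (Real.sqrt 2)⁻¹ • (T t + N₁ t) + u • N₂ t
      let χs : E3 := deriv (fun t => χ t v) s
      let χv : E3 := deriv (fun u => χ s u) v
      let χss : E3 := deriv (fun t => deriv (fun t' => χ t' v) t) s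
      let χsv : E3 := deriv (fun u => deriv (fun t => χ t u) s) v
      let χvv : E3 := deriv (fun u => deriv (fun u' => χ s u') u) v
      let n : E3 := ‖cross3 χs χv‖⁻¹ • cross3 χs χv
      let Ec : ℝ := ⟪χs, χs⟫
      let Fc : ℝ := ⟪χs, χv⟫
      let Gc : ℝ := ⟪χv, χv⟫
      let Lc : ℝ := ⟪χss, n⟫
      let Mc : ℝ := ⟪χsv, n⟫
      let Nc : ℝ := ⟪χvv, n⟫
      let Kc : ℝ := (Lc * Nc - Mc ^ 2) / (Ec * Gc - Fc ^ 2)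
      let Hc : ℝ := (Ec * Nc - 2 * Mc * Fc + Lc * Gc) / (2 * (Ec * Gc - Fc ^ 2))
      Kc = -(1/2) * (k₁ s * k₂ s / (k₁ s ^ 2 + v ^ 2 * k₂ s ^ 2 + Real.sqrt 2 * v * k₁ s * k₂ s)) ^ 2 :=
  stmt_2_general T N₁ N₂ k₁ k₂ hT hN₁ hN₂ hTu hN₁u hN₂u hTN₁ hN₁N₂ horient
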